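/- arXiv:2312.07741 — 5 statements merged into one kernel-verified Lean document; each statement's English description precedes it below -/
import Mathlib

section
/- Let (Ω,d) be a metric space, F : Ω → ℝ a function, μ, μ̂ ∈ Ω and δ > 0. Assume: (i) μ̂ is a global minimizer of F, i.e. F(μ̂) ≤ F(ω) for all ω ∈ Ω; (ii) F is convex along metric segments: for all x, y ∈ Ω and all λ ∈ [0,1] there exists z ∈ Ω with d(x,z) = λ·d(x,y), d(z,y) = (1−λ)·d(x,y), and F(z) ≤ λ·F(y) + (1−λ)·F(x); (iii) F(ω) − F(μ) > 0 for every ω ∈ Ω with d(ω,μ) = δ. Then d(μ̂,μ) < δ. -/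
/-- Localization of a metrically-convex minimizer (Proposition 1 of the paper).
`F` is the empirical Fréchet-median cost, `μ` the population Fréchet median,
`μhat` the sample Fréchet median (a global minimizer of `F`). -/
theorem stmt0 {Ω : Type*} [MetricSpace Ω] (F : Ω → ℝ) (μ μhat : Ω) (δ : ℝ) (hδ : 0 < δ)
    (hmin : ∀ ω : Ω, F μhat ≤ F ω)
    (hconv : ∀ x y : Ω, ∀ lam ∈ Set.Icc (0 : ℝ) 1,
      ∃ z : Ω, dist x z = lam * dist x y ∧ dist z y = (1 - lam) * dist x y ∧
        F z ≤ lam * F y + (1 - lam) * F x)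
    (hsphere : ∀ ω : Ω, dist ω μ = δ → 0 < F ω - F μ) :
    dist μhat μ < δ := by
  by_contra h
  push_neg at h
  have hd : (0:ℝ) < dist μ μhat := by
    rw [dist_comm]; linarith
  set lam := δ / dist μ μhat with hlam
  have hlam0 : 0 ≤ lam := le_of_lt (div_pos hδ hd)
  have hlam1 : lam ≤ 1 := by
    rw [hlam, div_le_one hd, dist_comm]; exact h
  obtain ⟨z, hz1, _, hz3⟩ := hconv μ μhat lam ⟨hlam0, hlam1⟩
  have hzd : dist z μ = δ := by
    rw [dist_comm, hz1, hlam, div_mul_cancel₀]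
    exact ne_of_gt hd
  have := hsphere z hzd
  have hmu : F μhat ≤ F μ := hmin μ
  nlinarith [hz3]
end

section
/- Let H be a separable real Hilbert space with orthonormal (Hilbert) basis (φⱼ)_{j∈ℕ}. Let Y be a strongly measurable random element of H with E[‖Y‖²] < ∞ and let w : ℝ → ℝ be a bounded nonnegative measurable function. Suppose that for every j the reflection Rⱼ x = x − 2⟨x,φⱼ⟩·φⱼ satisfies: Rⱼ ∘ Y has the same distribution as Y. Then there exists a continuous self-adjoint linear operator A : H → H such that ⟨A f, g⟩ = E[ w(‖Y‖)·⟨Y,f⟩·⟨Y,g⟩ ] for all f, g ∈ H, and each φⱼ is an eigenvector of A: A φⱼ = νⱼ·φⱼ with eigenvalue νⱼ = E[ w(‖Y‖)·⟨Y,φⱼ⟩² ]. -/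
open MeasureTheory
open scoped RealInnerProductSpace

/-- Operator-level content of Corollary 1 of the paper: the Winsorized
autocovariance operator has the basis vectors `φ j` as eigenvectors, with eigenvalues
`E[w(‖Y‖)⟨Y,φⱼ⟩²]`. -/
theorem stmt4 {H : Type*} [NormedAddCommGroup H] [InnerProductSpace ℝ H] [CompleteSpace H]
    [MeasurableSpace H] [BorelSpace H]
    (φ : HilbertBasis ℕ ℝ H)
    {Ω₀ : Type*} [MeasurableSpace Ω₀] (P : Measure Ω₀) [IsProbabilityMeasure P]
    (Y : Ω₀ → H) (hY : StronglyMeasurable Y)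
    (hint : Integrable (fun ω => ‖Y ω‖ ^ 2) P)
    (w : ℝ → ℝ) (hw : Measurable w) (hwnonneg : ∀ x : ℝ, 0 ≤ w x)
    (C : ℝ) (hwb : ∀ x : ℝ, w x ≤ C)
    (hsym : ∀ j : ℕ,
      Measure.map (fun ω => Y ω - (2 * ⟪Y ω, φ j⟫) • φ j) P = Measure.map Y P) :
    ∃ A : H →L[ℝ] H,
      (∀ x y : H, ⟪A x, y⟫ = ⟪x, A y⟫) ∧
      (∀ f g : H, ⟪A f, g⟫ = ∫ ω, w ‖Y ω‖ * ⟪Y ω, f⟫ * ⟪Y ω, g⟫ ∂P) ∧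
      (∀ j : ℕ, A (φ j) = (∫ ω, w ‖Y ω‖ * ⟪Y ω, φ j⟫ ^ 2 ∂P) • φ j) := by
  have hC0 : 0 ≤ C := le_trans (hwnonneg 0) (hwb 0)
  have hYm : Measurable Y := hY.measurable
  have hYinner : ∀ f : H, Measurable fun ω => ⟪Y ω, f⟫ := fun f =>
    (continuous_id.inner (continuous_const (y := f))).measurable.comp hYm
  have hwY : Measurable fun ω => w ‖Y ω‖ := hw.comp hYm.norm
  -- scalar integrability
  have hInt : ∀ f g : H, Integrable (fun ω => w ‖Y ω‖ * ⟪Y ω, f⟫ * ⟪Y ω, g⟫) P := by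
    intro f g
    refine Integrable.mono' (hint.const_mul (C * ‖f‖ * ‖g‖))
      (((hwY.mul (hYinner f)).mul (hYinner g)).aestronglyMeasurable) ?_
    filter_upwards with ω
    have h1 : |⟪Y ω, f⟫| ≤ ‖Y ω‖ * ‖f‖ := abs_real_inner_le_norm _ _
    have h2 : |⟪Y ω, g⟫| ≤ ‖Y ω‖ * ‖g‖ := abs_real_inner_le_norm _ _
    have h3 : 0 ≤ w ‖Y ω‖ := hwnonneg _
    have h4 : w ‖Y ω‖ ≤ C := hwb _
    calc ‖w ‖Y ω‖ * ⟪Y ω, f⟫ * ⟪Y ω, g⟫‖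
        = w ‖Y ω‖ * (|⟪Y ω, f⟫| * |⟪Y ω, g⟫|) := by
          rw [Real.norm_eq_abs, abs_mul, abs_mul, abs_of_nonneg h3]; ring
      _ ≤ C * ((‖Y ω‖ * ‖f‖) * (‖Y ω‖ * ‖g‖)) := by
          refine mul_le_mul h4 ?_ (by positivity) hC0
          exact mul_le_mul h1 h2 (abs_nonneg _) (by positivity)
      _ = C * ‖f‖ * ‖g‖ * ‖Y ω‖ ^ 2 := by ring
  -- vector integrability
  have hIntV : ∀ f : H, Integrable (fun ω => (w ‖Y ω‖ * ⟪Y ω, f⟫) • Y ω) P := by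
    intro f
    refine Integrable.mono' (hint.const_mul (C * ‖f‖))
      (((hwY.mul (hYinner f)).aemeasurable.aestronglyMeasurable).smul
        hY.aestronglyMeasurable) ?_
    filter_upwards with ω
    have h1 : |⟪Y ω, f⟫| ≤ ‖Y ω‖ * ‖f‖ := abs_real_inner_le_norm _ _
    have h4 : w ‖Y ω‖ ≤ C := hwb _
    have h3 : 0 ≤ w ‖Y ω‖ := hwnonneg _
    calc ‖(w ‖Y ω‖ * ⟪Y ω, f⟫) • Y ω‖
        = w ‖Y ω‖ * (|⟪Y ω, f⟫| * ‖Y ω‖) := by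
          rw [norm_smul, Real.norm_eq_abs, abs_mul, abs_of_nonneg h3]; ring
      _ ≤ C * ((‖Y ω‖ * ‖f‖) * ‖Y ω‖) := by
          refine mul_le_mul h4 ?_ (by positivity) hC0
          exact mul_le_mul_of_nonneg_right h1 (norm_nonneg _)
      _ = C * ‖f‖ * ‖Y ω‖ ^ 2 := by ring
  -- the linear map
  set A₀ : H →ₗ[ℝ] H :=
    { toFun := fun f => ∫ ω, (w ‖Y ω‖ * ⟪Y ω, f⟫) • Y ω ∂P
      map_add' := by
        intro f g
        show (∫ ω, (w ‖Y ω‖ * ⟪Y ω, f + g⟫) • Y ω ∂P)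
          = (∫ ω, (w ‖Y ω‖ * ⟪Y ω, f⟫) • Y ω ∂P) + ∫ ω, (w ‖Y ω‖ * ⟪Y ω, g⟫) • Y ω ∂P
        rw [← integral_add (hIntV f) (hIntV g)]
        have : (fun ω => (w ‖Y ω‖ * ⟪Y ω, f + g⟫) • Y ω)
            = fun ω => (w ‖Y ω‖ * ⟪Y ω, f⟫) • Y ω + (w ‖Y ω‖ * ⟪Y ω, g⟫) • Y ω := by
          funext ω
          rw [inner_add_right, mul_add, add_smul]
        rw [this]
      map_smul' := by
        intro c f
        show (∫ ω, (w ‖Y ω‖ * ⟪Y ω, c • f⟫) • Y ω ∂P)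
          = c • ∫ ω, (w ‖Y ω‖ * ⟪Y ω, f⟫) • Y ω ∂P
        rw [← integral_smul]
        have : (fun ω => (w ‖Y ω‖ * ⟪Y ω, c • f⟫) • Y ω)
            = fun ω => c • ((w ‖Y ω‖ * ⟪Y ω, f⟫) • Y ω) := by
          funext ω
          rw [real_inner_smul_right, smul_smul]
          congr 1; ring
        rw [this] } with hA₀
  have hbound : ∀ f : H, ‖A₀ f‖ ≤ (C * ∫ ω, ‖Y ω‖ ^ 2 ∂P) * ‖f‖ := by
    intro f
    calc ‖A₀ f‖ ≤ ∫ ω, ‖(w ‖Y ω‖ * ⟪Y ω, f⟫) • Y ω‖ ∂P :=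
          norm_integral_le_integral_norm _
      _ ≤ ∫ ω, (C * ‖f‖) * ‖Y ω‖ ^ 2 ∂P := by
          refine integral_mono (hIntV f).norm (hint.const_mul _) ?_
          intro ω
          simp only
          have h1 : |⟪Y ω, f⟫| ≤ ‖Y ω‖ * ‖f‖ := abs_real_inner_le_norm _ _
          have h4 : w ‖Y ω‖ ≤ C := hwb _
          have h3 : 0 ≤ w ‖Y ω‖ := hwnonneg _
          calc ‖(w ‖Y ω‖ * ⟪Y ω, f⟫) • Y ω‖
              = w ‖Y ω‖ * (|⟪Y ω, f⟫| * ‖Y ω‖) := by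
                rw [norm_smul, Real.norm_eq_abs, abs_mul, abs_of_nonneg h3]; ring
            _ ≤ C * ((‖Y ω‖ * ‖f‖) * ‖Y ω‖) := by
                refine mul_le_mul h4 ?_ (by positivity) hC0
                exact mul_le_mul_of_nonneg_right h1 (norm_nonneg _)
            _ = (C * ‖f‖) * ‖Y ω‖ ^ 2 := by ring
      _ = (C * ∫ ω, ‖Y ω‖ ^ 2 ∂P) * ‖f‖ := by
          rw [integral_const_mul]; ring
  -- the formula for the inner product
  have hformula : ∀ f g : H, (⟪A₀ f, g⟫) = ∫ ω, w ‖Y ω‖ * ⟪Y ω, f⟫ * ⟪Y ω, g⟫ ∂P := by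
    intro f g
    have heq : (fun ω => (⟪g, (w ‖Y ω‖ * ⟪Y ω, f⟫) • Y ω⟫ : ℝ))
        = fun ω => w ‖Y ω‖ * ⟪Y ω, f⟫ * ⟪Y ω, g⟫ := by
      funext ω
      rw [real_inner_smul_right, real_inner_comm g (Y ω)]
    calc (⟪A₀ f, g⟫) = ⟪g, A₀ f⟫ := real_inner_comm _ _
      _ = ∫ ω, (⟪g, (w ‖Y ω‖ * ⟪Y ω, f⟫) • Y ω⟫ : ℝ) ∂P :=
          (integral_inner (hIntV f) g).symm
      _ = ∫ ω, w ‖Y ω‖ * ⟪Y ω, f⟫ * ⟪Y ω, g⟫ ∂P := by rw [heq]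
  refine ⟨A₀.mkContinuous _ hbound, ?_, hformula, ?_⟩
  · -- self-adjoint
    intro x y
    show (⟪A₀ x, y⟫) = ⟪x, A₀ y⟫
    have hxy : (⟪x, A₀ y⟫ : ℝ) = ⟪A₀ y, x⟫ := real_inner_comm _ _
    rw [hformula x y, hxy, hformula y x]
    have : (fun ω => w ‖Y ω‖ * ⟪Y ω, x⟫ * ⟪Y ω, y⟫)
        = fun ω => w ‖Y ω‖ * ⟪Y ω, y⟫ * ⟪Y ω, x⟫ := by
      funext ω; ring
    rw [this]
  · -- eigenvectors
    intro j
    have hφn : ‖(φ j : H)‖ = 1 := φ.orthonormal.1 j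
    have hφj : (⟪(φ j : H), φ j⟫) = 1 := by
      rw [real_inner_self_eq_norm_mul_norm, hφn]; ring
    -- key symmetry fact
    have hzero : ∀ g' : H, ⟪g', (φ j : H)⟫ = 0 →
        (∫ ω, w ‖Y ω‖ * ⟪Y ω, φ j⟫ * ⟪Y ω, g'⟫ ∂P) = 0 := by
      intro g' hg'
      set F : H → ℝ := fun x => w ‖x‖ * ⟪x, φ j⟫ * ⟪x, g'⟫ with hF
      set T : H → H := fun x => x - (2 * ⟪x, φ j⟫) • φ j with hT
      have hTcont : Continuous T := by
        apply continuous_id.sub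
        exact ((continuous_const.mul (continuous_id.inner continuous_const)).smul
          continuous_const)
      have hTY : Measurable fun ω => T (Y ω) := hTcont.measurable.comp hYm
      have hFmeas : Measurable F :=
        ((hw.comp measurable_norm).mul
          (continuous_id.inner continuous_const).measurable).mul
          (continuous_id.inner continuous_const).measurable
      have hTnorm : ∀ x : H, ‖T x‖ = ‖x‖ := by
        intro x
        have hsq : ‖T x‖ ^ 2 = ‖x‖ ^ 2 := by
          rw [hT]
          simp only
          rw [norm_sub_sq_real, real_inner_smul_right, norm_smul, Real.norm_eq_abs]
          rw [mul_pow, sq_abs, hφn]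
          ring
        have := congrArg Real.sqrt hsq
        rwa [Real.sqrt_sq (norm_nonneg _), Real.sqrt_sq (norm_nonneg _)] at this
      have hFT : ∀ x : H, F (T x) = - F x := by
        intro x
        have h1 : (⟪T x, (φ j : H)⟫) = - ⟪x, φ j⟫ := by
          rw [hT]; simp only
          rw [inner_sub_left, real_inner_smul_left, hφj]; ring
        have h0 : (⟪(φ j : H), g'⟫ : ℝ) = 0 := by
          rw [real_inner_comm]; exact hg'
        have h2 : (⟪T x, g'⟫) = ⟪x, g'⟫ := by
          rw [hT]; simp only
          rw [inner_sub_left, real_inner_smul_left]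
          simp only [h0]
          ring
        rw [hF]; simp only
        rw [hTnorm, h1, h2]; ring
      have hmapint : (∫ ω, F (Y ω) ∂P) = ∫ x, F x ∂(Measure.map Y P) :=
        (integral_map hYm.aemeasurable hFmeas.aestronglyMeasurable).symm
      have hmapint2 : (∫ x, F x ∂(Measure.map Y P)) = ∫ ω, F (T (Y ω)) ∂P := by
        rw [← hsym j]
        have h : (Measure.map (fun ω => Y ω - (2 * ⟪Y ω, φ j⟫) • φ j) P)
            = Measure.map (fun ω => T (Y ω)) P := rfl
        rw [h, integral_map hTY.aemeasurable hFmeas.aestronglyMeasurable]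
      have hself : (∫ ω, F (Y ω) ∂P) = - ∫ ω, F (Y ω) ∂P := by
        calc (∫ ω, F (Y ω) ∂P) = ∫ ω, F (T (Y ω)) ∂P := by rw [hmapint, hmapint2]
          _ = ∫ ω, - F (Y ω) ∂P := by
              have : (fun ω => F (T (Y ω))) = fun ω => - F (Y ω) := by
                funext ω; rw [hFT]
              rw [this]
          _ = - ∫ ω, F (Y ω) ∂P := integral_neg _
      have : (∫ ω, F (Y ω) ∂P) = 0 := by linarith
      exact this
    -- eigen equation
    apply ext_inner_right ℝ
    intro g
    show (⟪A₀ (φ j), g⟫) = ⟪(∫ ω, w ‖Y ω‖ * ⟪Y ω, φ j⟫ ^ 2 ∂P) • (φ j : H), g⟫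
    rw [hformula (φ j) g, real_inner_smul_left]
    set c : ℝ := ⟪g, (φ j : H)⟫ with hc
    set g' : H := g - c • φ j with hg'def
    have hg'perp : (⟪g', (φ j : H)⟫) = 0 := by
      rw [hg'def, inner_sub_left, real_inner_smul_left, hφj, hc]; ring
    have hsplit : (∫ ω, w ‖Y ω‖ * ⟪Y ω, φ j⟫ * ⟪Y ω, g⟫ ∂P)
        = (∫ ω, w ‖Y ω‖ * ⟪Y ω, φ j⟫ * ⟪Y ω, g'⟫ ∂P)
          + c * ∫ ω, w ‖Y ω‖ * ⟪Y ω, φ j⟫ * ⟪Y ω, φ j⟫ ∂P := by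
      rw [← integral_const_mul, ← integral_add (hInt (φ j) g') ((hInt (φ j) (φ j)).const_mul c)]
      have : (fun ω => w ‖Y ω‖ * ⟪Y ω, φ j⟫ * ⟪Y ω, g⟫)
          = fun ω => w ‖Y ω‖ * ⟪Y ω, φ j⟫ * ⟪Y ω, g'⟫
            + c * (w ‖Y ω‖ * ⟪Y ω, φ j⟫ * ⟪Y ω, φ j⟫) := by
        funext ω
        have hdecomp : (⟪Y ω, g⟫) = ⟪Y ω, g'⟫ + c * ⟪Y ω, φ j⟫ := by
          rw [hg'def, inner_sub_right, real_inner_smul_right]; ring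
        rw [hdecomp]; ring
      rw [this]
    rw [hsplit, hzero g' hg'perp, zero_add]
    have hpow : (∫ ω, w ‖Y ω‖ * ⟪Y ω, φ j⟫ ^ 2 ∂P)
        = ∫ ω, w ‖Y ω‖ * ⟪Y ω, φ j⟫ * ⟪Y ω, φ j⟫ ∂P := by
      have : (fun ω => w ‖Y ω‖ * ⟪Y ω, φ j⟫ ^ 2)
          = fun ω => w ‖Y ω‖ * ⟪Y ω, φ j⟫ * ⟪Y ω, φ j⟫ := by
        funext ω; ring
      rw [this]
    rw [hpow, mul_comm]
    congr 1
    rw [hc]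
    exact real_inner_comm _ _
end

section
/- Let d ∈ ℕ, let j, k ∈ {1,…,d} with j ≠ k, and let Z = (Z₁,…,Z_d) be a random vector in ℝ^d with E[‖Z‖²] < ∞ whose distribution is invariant under swapping the j-th and k-th coordinates. Let λ₁,…,λ_d ≥ 0 and let w : [0,∞) → [0,∞) be a measurable function that is nonincreasing, bounded by 1, and such that u ↦ u·w(u) is nondecreasing on [0,∞). If λⱼ ≤ λₖ, then λⱼ·E[ Zⱼ²·w(Σ_{l=1}^d λ_l·Z_l²) ] ≤ λₖ·E[ Zₖ²·w(Σ_{l=1}^d λ_l·Z_l²) ]. -/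
open MeasureTheory

lemma key5 (a b lj lk S S' t t' : ℝ)
    (ha : 0 ≤ a) (hb : 0 ≤ b) (hlj : 0 ≤ lj) (hle : lj ≤ lk)
    (ht : 0 ≤ t) (ht' : 0 ≤ t')
    (hdiff : S' - S = (lk - lj) * (a - b))
    (hSa : lj * a + lk * b ≤ S)
    (hA : S ≤ S' → t' ≤ t) (hA' : S' ≤ S → t ≤ t')
    (hU : S ≤ S' → S * t ≤ S' * t') (hU' : S' ≤ S → S' * t' ≤ S * t) :
    0 ≤ (lk * b - lj * a) * t + (lk * a - lj * b) * t' := by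
  rcases le_total b a with h | h
  · have hSS : S ≤ S' := by nlinarith
    have h1 := hA hSS
    have h2 := hU hSS
    nlinarith [mul_nonneg (sub_nonneg.2 h1) (mul_nonneg (hlj.trans hle) hb),
      mul_nonneg (sub_nonneg.2 hle) (mul_nonneg hb ht'),
      mul_nonneg (sub_nonneg.2 h1) (sub_nonneg.2 hSa)]
  · have hSS : S' ≤ S := by nlinarith
    have h1 := hA' hSS
    have h2 := hU' hSS
    nlinarith [mul_nonneg (sub_nonneg.2 h1) (mul_nonneg (hlj.trans hle) ha),
      mul_nonneg (sub_nonneg.2 hle) (mul_nonneg ha ht),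
      mul_nonneg (sub_nonneg.2 h1) (sub_nonneg.2 hSa)]

/-- Eigenvalue-ordering preservation for the Winsorized weights (quantitative
core of Corollary 1 of the paper). -/
theorem stmt5 {d : ℕ} (j k : Fin d) (hjk : j ≠ k)
    {Ω₀ : Type*} [MeasurableSpace Ω₀] (P : Measure Ω₀) [IsProbabilityMeasure P]
    (Z : Ω₀ → Fin d → ℝ) (hZ : Measurable Z)
    (hint : Integrable (fun ω => ∑ l : Fin d, (Z ω l) ^ 2) P)
    (hswap : Measure.map (fun ω => Z ω ∘ Equiv.swap j k) P = Measure.map Z P)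
    (lam : Fin d → ℝ) (hlam : ∀ l : Fin d, 0 ≤ lam l)
    (w : ℝ → ℝ) (hw : Measurable w)
    (hmono : AntitoneOn w (Set.Ici 0))
    (hwnonneg : ∀ u : ℝ, 0 ≤ u → 0 ≤ w u)
    (hwb : ∀ u : ℝ, 0 ≤ u → w u ≤ 1)
    (huw : MonotoneOn (fun u => u * w u) (Set.Ici 0))
    (hle : lam j ≤ lam k) :
    lam j * ∫ ω, (Z ω j) ^ 2 * w (∑ l : Fin d, lam l * (Z ω l) ^ 2) ∂P ≤
      lam k * ∫ ω, (Z ω k) ^ 2 * w (∑ l : Fin d, lam l * (Z ω l) ^ 2) ∂P := by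
  set σ := Equiv.swap j k with hσ
  -- the weighted sums
  set S : (Fin d → ℝ) → ℝ := fun z => ∑ l : Fin d, lam l * (z l) ^ 2 with hSdef
  set S' : (Fin d → ℝ) → ℝ := fun z => ∑ l : Fin d, lam (σ l) * (z l) ^ 2 with hS'def
  have hS0 : ∀ z, 0 ≤ S z := fun z =>
    Finset.sum_nonneg fun l _ => mul_nonneg (hlam l) (sq_nonneg _)
  have hS'0 : ∀ z, 0 ≤ S' z := fun z =>
    Finset.sum_nonneg fun l _ => mul_nonneg (hlam _) (sq_nonneg _)
  have hScomp : ∀ z : Fin d → ℝ, S (z ∘ σ) = S' z := by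
    intro z
    have := Equiv.sum_comp σ (fun m => lam (σ m) * (z m) ^ 2)
    simpa [S, S', Function.comp, hσ, Equiv.swap_apply_self] using this
  -- measurability
  have hZl : ∀ l : Fin d, Measurable fun ω => Z ω l := fun l => (measurable_pi_apply l).comp hZ
  have hSmeas : Measurable fun ω => S (Z ω) := by
    apply Finset.measurable_sum
    intro l _
    exact (measurable_const.mul ((hZl l).pow measurable_const))
  -- each coordinate square is integrable
  have hIZ : ∀ l : Fin d, Integrable (fun ω => (Z ω l) ^ 2) P := by
    intro l
    refine hint.mono (((hZl l).pow measurable_const).aestronglyMeasurable) ?_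
    filter_upwards with ω
    rw [Real.norm_eq_abs, Real.norm_eq_abs, abs_of_nonneg (sq_nonneg _),
      abs_of_nonneg (Finset.sum_nonneg fun l _ => sq_nonneg _)]
    exact Finset.single_le_sum (f := fun l => (Z ω l) ^ 2) (fun i _ => sq_nonneg _)
      (Finset.mem_univ l)
  -- integrability of the weighted winsorized terms
  have hWint : ∀ (c : ℝ) (l : Fin d) (T : (Fin d → ℝ) → ℝ),
      (∀ z, 0 ≤ T z) → Measurable (fun ω => T (Z ω)) →
      Integrable (fun ω => c * (Z ω l) ^ 2 * w (T (Z ω))) P := by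
    intro c l T hT0 hTm
    refine ((hIZ l).const_mul c).mono
      ((measurable_const.mul ((hZl l).pow measurable_const)).mul (hw.comp hTm)).aestronglyMeasurable ?_
    filter_upwards with ω
    simp only [Real.norm_eq_abs, abs_mul]
    have h1 : |w (T (Z ω))| ≤ 1 := by
      rw [abs_of_nonneg (hwnonneg _ (hT0 _))]; exact hwb _ (hT0 _)
    calc |c| * |(Z ω l) ^ 2| * |w (T (Z ω))| ≤ |c| * |(Z ω l) ^ 2| * 1 := by
          exact mul_le_mul_of_nonneg_left h1 (by positivity)
      _ = |c| * |(Z ω l) ^ 2| := by ring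
  have hS'meas : Measurable fun ω => S' (Z ω) := by
    apply Finset.measurable_sum
    intro l _
    exact (measurable_const.mul ((hZl l).pow measurable_const))
  -- the difference function g
  have hSMz : Measurable S := by
    apply Finset.measurable_sum
    intro l _
    exact measurable_const.mul ((measurable_pi_apply l).pow measurable_const)
  set g : (Fin d → ℝ) → ℝ :=
    fun z => lam k * (z k) ^ 2 * w (S z) - lam j * (z j) ^ 2 * w (S z) with hgdef
  have hgmeas : Measurable g :=
    ((measurable_const.mul ((measurable_pi_apply k).pow measurable_const)).mul
        (hw.comp hSMz)).sub
      ((measurable_const.mul ((measurable_pi_apply j).pow measurable_const)).mul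
        (hw.comp hSMz))
  -- change of variables
  have hZσmeas : Measurable fun ω => Z ω ∘ σ :=
    measurable_pi_lambda _ fun l => (measurable_pi_apply (σ l)).comp hZ
  have hcov : ∫ ω, g (Z ω) ∂P = ∫ ω, g (Z ω ∘ σ) ∂P := by
    rw [← integral_map hZ.aemeasurable hgmeas.aestronglyMeasurable, ← hswap,
      integral_map hZσmeas.aemeasurable hgmeas.aestronglyMeasurable]
  have hgswap : ∀ z : Fin d → ℝ,
      g (z ∘ σ) = lam k * (z j) ^ 2 * w (S' z) - lam j * (z k) ^ 2 * w (S' z) := by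
    intro z
    have hj : (z ∘ σ) j = z k := by simp [σ, Equiv.swap_apply_left]
    have hk : (z ∘ σ) k = z j := by simp [σ, Equiv.swap_apply_right]
    rw [hgdef]
    simp only [hj, hk, hScomp]
  -- integrability of g∘Z and of g(Z∘σ)
  have hg1 : Integrable (fun ω => g (Z ω)) P := by
    simp only [hgdef]
    exact (hWint (lam k) k S hS0 hSmeas).sub (hWint (lam j) j S hS0 hSmeas)
  have hg2 : Integrable (fun ω => g (Z ω ∘ σ)) P := by
    have : (fun ω => g (Z ω ∘ σ)) =
        fun ω => lam k * (Z ω j) ^ 2 * w (S' (Z ω)) - lam j * (Z ω k) ^ 2 * w (S' (Z ω)) := by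
      funext ω; exact hgswap (Z ω)
    rw [this]
    exact (hWint (lam k) j S' hS'0 hS'meas).sub (hWint (lam j) k S' hS'0 hS'meas)
  -- pointwise inequality
  have hpt : ∀ z : Fin d → ℝ, 0 ≤ g z + g (z ∘ σ) := by
    intro z
    rw [hgswap z, hgdef]
    have hdiff : S' z - S z = (lam k - lam j) * ((z j) ^ 2 - (z k) ^ 2) := by
      have h0 : ∀ l, l ∉ ({j, k} : Finset (Fin d)) →
          lam (σ l) * (z l) ^ 2 - lam l * (z l) ^ 2 = 0 := by
        intro l hl
        simp only [Finset.mem_insert, Finset.mem_singleton, not_or] at hl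
        rw [hσ, Equiv.swap_apply_of_ne_of_ne hl.1 hl.2, sub_self]
      have : S' z - S z = ∑ l : Fin d, (lam (σ l) * (z l) ^ 2 - lam l * (z l) ^ 2) := by
        rw [Finset.sum_sub_distrib]
      rw [this, ← Finset.sum_subset (Finset.subset_univ {j, k}) (fun l _ hl => h0 l hl),
        Finset.sum_pair hjk]
      simp [σ, Equiv.swap_apply_left, Equiv.swap_apply_right]
      ring
    have hSa : lam j * (z j) ^ 2 + lam k * (z k) ^ 2 ≤ S z := by
      have : lam j * (z j) ^ 2 + lam k * (z k) ^ 2 =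
          ∑ l ∈ ({j, k} : Finset (Fin d)), lam l * (z l) ^ 2 := by
        rw [Finset.sum_pair hjk]
      rw [this]
      exact Finset.sum_le_sum_of_subset_of_nonneg (Finset.subset_univ _)
        (fun l _ _ => mul_nonneg (hlam l) (sq_nonneg _))
    have := key5 ((z j) ^ 2) ((z k) ^ 2) (lam j) (lam k) (S z) (S' z)
      (w (S z)) (w (S' z)) (sq_nonneg _) (sq_nonneg _) (hlam j) hle
      (hwnonneg _ (hS0 z)) (hwnonneg _ (hS'0 z)) hdiff hSa
      (fun h => hmono (hS0 z) (hS'0 z) h) (fun h => hmono (hS'0 z) (hS0 z) h)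
      (fun h => huw (hS0 z) (hS'0 z) h) (fun h => huw (hS'0 z) (hS0 z) h)
    show 0 ≤ lam k * z k ^ 2 * w (S z) - lam j * z j ^ 2 * w (S z) +
      (lam k * z j ^ 2 * w (S' z) - lam j * z k ^ 2 * w (S' z))
    nlinarith [this]
  -- combine
  have hInt : 0 ≤ ∫ ω, g (Z ω) ∂P := by
    have h2 : (2 : ℝ) * ∫ ω, g (Z ω) ∂P = ∫ ω, (g (Z ω) + g (Z ω ∘ σ)) ∂P := by
      rw [integral_add hg1 hg2, ← hcov]; ring
    have := integral_nonneg (μ := P) (f := fun ω => g (Z ω) + g (Z ω ∘ σ))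
      (fun ω => hpt (Z ω))
    linarith [h2 ▸ this]
  have hsplit : ∫ ω, g (Z ω) ∂P =
      lam k * ∫ ω, (Z ω k) ^ 2 * w (S (Z ω)) ∂P -
      lam j * ∫ ω, (Z ω j) ^ 2 * w (S (Z ω)) ∂P := by
    simp only [hgdef]
    rw [integral_sub (hWint (lam k) k S hS0 hSmeas) (hWint (lam j) j S hS0 hSmeas)]
    rw [← integral_const_mul, ← integral_const_mul]
    congr 1 <;> (apply integral_congr_ae; filter_upwards with ω; ring)
  rw [hsplit] at hInt
  simp only [hSdef] at hInt
  linarith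
end

section
/- Let H be a real Hilbert space and let A, B : H → H be continuous self-adjoint linear operators. Suppose u ∈ H with ‖u‖ = 1 and λ ∈ ℝ satisfy A u = λ·u; suppose ψ ∈ H with ‖ψ‖ = 1 and μ ∈ ℝ satisfy B ψ = μ·ψ; and suppose δ > 0 is such that ‖A v − μ·v‖ ≥ δ·‖v‖ for every v ∈ H with ⟨v,u⟩ = 0. Then ‖ψ − ⟨ψ,u⟩·u‖ ≤ ‖A − B‖ / δ, where ‖A − B‖ is the operator norm. -/
open scoped RealInnerProductSpace

/-- Davis–Kahan-type perturbation bound for a single eigenvector of a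
self-adjoint operator (spectral ingredient of Theorems 4 and 5 of the paper). -/
theorem stmt7 {H : Type*} [NormedAddCommGroup H] [InnerProductSpace ℝ H]
    (A B : H →L[ℝ] H)
    (hA : ∀ x y : H, ⟪A x, y⟫ = ⟪x, A y⟫)
    (hB : ∀ x y : H, ⟪B x, y⟫ = ⟪x, B y⟫)
    (u : H) (hu : ‖u‖ = 1) (lam : ℝ) (hAu : A u = lam • u)
    (ψ : H) (hψ : ‖ψ‖ = 1) (mu : ℝ) (hBψ : B ψ = mu • ψ)
    (δ : ℝ) (hδ : 0 < δ)
    (hgap : ∀ v : H, ⟪v, u⟫ = 0 → δ * ‖v‖ ≤ ‖A v - mu • v‖) :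
    ‖ψ - ⟪ψ, u⟫ • u‖ ≤ ‖A - B‖ / δ := by
  set c : ℝ := ⟪ψ, u⟫ with hc
  set v : H := ψ - c • u with hv
  have huu : ⟪u, u⟫ = 1 := by
    rw [real_inner_self_eq_norm_sq, hu]; norm_num
  have hvu : ⟪v, u⟫ = 0 := by
    rw [hv, inner_sub_left, real_inner_smul_left, huu]; ring
  set w : H := A v - mu • v with hw
  have hwu : ⟪w, u⟫ = 0 := by
    rw [hw, inner_sub_left, real_inner_smul_left, hvu, hA v u, hAu,
      real_inner_smul_right, hvu]; ring
  -- (A - B) ψ = w + (c * (lam - mu)) • u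
  have hkey : (A - B) ψ = w + (c * (lam - mu)) • u := by
    have hψv : ψ = v + c • u := by rw [hv]; abel
    simp only [ContinuousLinearMap.sub_apply, hBψ, hw]
    rw [hψv, map_add, map_smul, hAu]
    module
  have hnw : ‖w‖ ≤ ‖(A - B) ψ‖ := by
    have h1 : ⟪w, (A - B) ψ⟫ = ‖w‖ ^ 2 := by
      rw [hkey, inner_add_right, real_inner_smul_right, hwu,
        real_inner_self_eq_norm_sq]; ring
    have h2 := real_inner_le_norm w ((A - B) ψ)
    nlinarith [norm_nonneg w, norm_nonneg ((A - B) ψ)]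
  have h3 : ‖(A - B) ψ‖ ≤ ‖A - B‖ := by
    calc ‖(A - B) ψ‖ ≤ ‖A - B‖ * ‖ψ‖ := (A - B).le_opNorm ψ
    _ = ‖A - B‖ := by rw [hψ, mul_one]
  have h4 := hgap v hvu
  rw [le_div_iff₀ hδ]
  calc ‖v‖ * δ = δ * ‖v‖ := mul_comm _ _
  _ ≤ ‖w‖ := h4
  _ ≤ ‖A - B‖ := hnw.trans h3
end

section
/- Let N, B, k ∈ ℕ with k + B < N, and let a, b : Fin N → ℝ be two tuples that differ in at most B coordinates, i.e. the set {i : a i ≠ b i} has cardinality at most B. Let a↑ and b↑ denote the nondecreasing rearrangements (order statistics) of a and b. Then b↑(k) ≤ a↑(k + B) (indices taken 0-based). -/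
/-- Order-statistic stability under contamination of at most `B` coordinates
(combinatorial core of Theorem 6 of the paper): the `k`-th order statistic of `b` is at most
the `(k+B)`-th order statistic of `a`. -/
theorem stmt10 {N : ℕ} (B k : ℕ) (h : k + B < N) (a b : Fin N → ℝ)
    (hdiff : Set.ncard {i : Fin N | a i ≠ b i} ≤ B) :
    (b ∘ Tuple.sort b) ⟨k, lt_of_le_of_lt (Nat.le_add_right k B) h⟩ ≤
      (a ∘ Tuple.sort a) ⟨k + B, h⟩ := by
  set t := (a ∘ Tuple.sort a) ⟨k + B, h⟩ with ht
  -- counting through the sorting permutation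
  have hperm : ∀ f : Fin N → ℝ,
      (Finset.univ.filter (fun j => (f ∘ Tuple.sort f) j ≤ t)).card
        = (Finset.univ.filter (fun i => f i ≤ t)).card := by
    intro f
    apply Finset.card_bij (fun j _ => Tuple.sort f j)
    · intro j hj
      simp only [Finset.mem_filter, Finset.mem_univ, true_and] at hj ⊢
      exact hj
    · intro j₁ _ j₂ _ he
      exact (Tuple.sort f).injective he
    · intro i hi
      refine ⟨(Tuple.sort f)⁻¹ i, ?_, by simp⟩
      simp only [Finset.mem_filter, Finset.mem_univ, true_and, Function.comp_apply] at hi ⊢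
      simpa using hi
  -- at least k+B+1 coordinates of a are ≤ t
  have hA : k + B + 1 ≤ (Finset.univ.filter (fun i => a i ≤ t)).card := by
    rw [← hperm a]
    have hsub : Finset.Iic (⟨k + B, h⟩ : Fin N)
        ⊆ Finset.univ.filter (fun j => (a ∘ Tuple.sort a) j ≤ t) := by
      intro j hj
      simp only [Finset.mem_Iic] at hj
      simp only [Finset.mem_filter, Finset.mem_univ, true_and]
      exact Tuple.monotone_sort a hj
    have := Finset.card_le_card hsub
    simpa [Fin.card_Iic] using this
  -- at least k+1 coordinates of b are ≤ t
  have hDcard : (Finset.univ.filter (fun i => a i ≠ b i)).card ≤ B := by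
    have : {i : Fin N | a i ≠ b i} = ↑(Finset.univ.filter (fun i => a i ≠ b i)) := by
      ext i; simp
    rwa [this, Set.ncard_coe_finset] at hdiff
  have hB : k + 1 ≤ (Finset.univ.filter (fun i => b i ≤ t)).card := by
    have hsub : Finset.univ.filter (fun i => a i ≤ t)
        ⊆ Finset.univ.filter (fun i => b i ≤ t) ∪ Finset.univ.filter (fun i => a i ≠ b i) := by
      intro i hi
      simp only [Finset.mem_filter, Finset.mem_univ, true_and, Finset.mem_union] at hi ⊢
      by_cases he : a i = b i
      · exact Or.inl (he ▸ hi)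
      · exact Or.inr he
    have := (Finset.card_le_card hsub).trans (Finset.card_union_le _ _)
    omega
  -- conclude
  by_contra hc
  push_neg at hc
  have hsub : Finset.univ.filter (fun j => (b ∘ Tuple.sort b) j ≤ t)
      ⊆ Finset.univ.filter (fun j : Fin N => (j : ℕ) < k) := by
    intro j hj
    simp only [Finset.mem_filter, Finset.mem_univ, true_and] at hj ⊢
    by_contra hk
    push_neg at hk
    have : (⟨k, lt_of_le_of_lt (Nat.le_add_right k B) h⟩ : Fin N) ≤ j := hk
    exact absurd (le_trans (Tuple.monotone_sort b this) hj) (not_le.mpr hc)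
  have hcard : (Finset.univ.filter (fun j : Fin N => (j : ℕ) < k)).card ≤ k := by
    have hsub2 : Finset.univ.filter (fun j : Fin N => (j : ℕ) < k)
        ⊆ Finset.Iio (⟨k, lt_of_le_of_lt (Nat.le_add_right k B) h⟩ : Fin N) := by
      intro j hj
      simp only [Finset.mem_filter] at hj
      simpa [Finset.mem_Iio, Fin.lt_def] using hj.2
    have := Finset.card_le_card hsub2
    simpa [Fin.card_Iio] using this
  have := (hperm b) ▸ hB
  have := Finset.card_le_card hsub
  omega
end
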